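/- arXiv:1604.04035 — 5 statements merged into one kernel-verified Lean document; each statement's English description precedes it below -/
import Mathlib

section
/- Let J be a symmetric nonnegative measure on D × D (D a measurable subset of a measure space). For any bounded measurable functions f, g on D (for which all integrals below are finite) and any η > 0, one has (1 - η^{-1}) ∫_{D×D} f(x)² (g(x)-g(y))² J(dx,dy) ≤ ∫_{D×D} (g(x)f(x)² - g(y)f(y)²)(g(x)-g(y)) J(dx,dy) + η ∫_{D×D} g(x)² (f(x)-f(y))² J(dx,dy). -/
open MeasureTheory

/-- For a symmetric jump measure `J` and bounded measurable `f, g`: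
    `(1-η⁻¹)∫ f(x)²(g(x)-g(y))² J ≤ ∫ (g f²(x) - g f²(y))(g(x)-g(y)) J + η ∫ g(x)²(f(x)-f(y))² J`. -/
theorem stmt_3 {α : Type*} [MeasurableSpace α] (J : Measure (α × α))
    (hsym : J.map Prod.swap = J)
    (f g : α → ℝ) (hf : Measurable f) (hg : Measurable g)
    (Cf Cg : ℝ) (hfb : ∀ x, |f x| ≤ Cf) (hgb : ∀ x, |g x| ≤ Cg)
    (η : ℝ) (hη : 0 < η)
    (h1 : Integrable (fun p : α × α => (f p.1) ^ 2 * (g p.1 - g p.2) ^ 2) J)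
    (h2 : Integrable
      (fun p : α × α => (g p.1 * (f p.1) ^ 2 - g p.2 * (f p.2) ^ 2) * (g p.1 - g p.2)) J)
    (h3 : Integrable (fun p : α × α => (g p.1) ^ 2 * (f p.1 - f p.2) ^ 2) J) :
    (1 - η⁻¹) * ∫ p : α × α, (f p.1) ^ 2 * (g p.1 - g p.2) ^ 2 ∂J
      ≤ (∫ p : α × α, (g p.1 * (f p.1) ^ 2 - g p.2 * (f p.2) ^ 2) * (g p.1 - g p.2) ∂J)
        + η * ∫ p : α × α, (g p.1) ^ 2 * (f p.1 - f p.2) ^ 2 ∂J := by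
  set e := (MeasurableEquiv.prodComm (α := α) (β := α)) with he
  have hecoe : (⇑e : α × α → α × α) = Prod.swap := rfl
  have hmap : J.map e = J := by rw [hecoe, hsym]
  have hswap_int : ∀ F : α × α → ℝ, Integrable F J →
      Integrable (fun p : α × α => F p.swap) J := by
    intro F hF
    have := (integrable_map_equiv e F).mp (by rwa [hmap])
    simpa [hecoe, Function.comp_def] using this
  have hswap_eq : ∀ F : α × α → ℝ, ∫ p, F p ∂J = ∫ p : α × α, F p.swap ∂J := by
    intro F
    conv_lhs => rw [← hmap]
    rw [integral_map_equiv e F]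
    rfl
  -- integrands
  set F1 : α × α → ℝ := fun p => (f p.1) ^ 2 * (g p.1 - g p.2) ^ 2 with hF1
  set F2 : α × α → ℝ :=
    fun p => (g p.1 * (f p.1) ^ 2 - g p.2 * (f p.2) ^ 2) * (g p.1 - g p.2) with hF2
  set F3 : α × α → ℝ := fun p => (g p.1) ^ 2 * (f p.1 - f p.2) ^ 2 with hF3
  set K : α × α → ℝ :=
    fun p => g p.2 * ((f p.1) ^ 2 - (f p.2) ^ 2) * (g p.1 - g p.2) with hK
  have hKint : Integrable K J := by
    have : K = fun p => F2 p - F1 p := by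
      funext p; simp only [hK, hF1, hF2]; ring
    rw [this]; exact h2.sub h1
  have hK'int : Integrable (fun p : α × α => K p.swap) J := hswap_int K hKint
  have hF1'int : Integrable (fun p : α × α => F1 p.swap) J := hswap_int F1 h1
  have hF3'int : Integrable (fun p : α × α => F3 p.swap) J := hswap_int F3 h3
  -- identity: F2 = F1 + K pointwise
  have hsplit : ∫ p, F2 p ∂J = (∫ p, F1 p ∂J) + ∫ p, K p ∂J := by
    rw [← integral_add h1 hKint]
    congr 1; funext p; simp only [hK, hF1, hF2]; ring
  -- swapped integrals equal
  have hKswap : ∫ p, K p ∂J = ∫ p : α × α, K p.swap ∂J := hswap_eq K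
  have hF1swap : ∫ p, F1 p ∂J = ∫ p : α × α, F1 p.swap ∂J := hswap_eq F1
  have hF3swap : ∫ p, F3 p ∂J = ∫ p : α × α, F3 p.swap ∂J := hswap_eq F3
  -- pointwise bound: -(K p + K p.swap) ≤ η⁻¹ (F1 p + F1 p.swap) + η (F3 p + F3 p.swap)
  have hpt : ∀ p : α × α, -(K p + K p.swap) ≤
      η⁻¹ * (F1 p + F1 p.swap) + η * (F3 p + F3 p.swap) := by
    intro p
    obtain ⟨x, y⟩ := p
    simp only [hK, hF1, hF3, Prod.swap]
    set a := f x; set b := f y; set c := g x; set d := g y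
    set u := (a + b) * (c - d) with hu_def
    set v := (c + d) * (a - b) with hv_def
    have hηinv : 0 < η⁻¹ := inv_pos.mpr hη
    have hu : u ^ 2 ≤ 2 * (a ^ 2 * (c - d) ^ 2 + b ^ 2 * (d - c) ^ 2) := by
      simp only [hu_def]; nlinarith [sq_nonneg ((a - b) * (c - d))]
    have hv : v ^ 2 ≤ 2 * (c ^ 2 * (a - b) ^ 2 + d ^ 2 * (b - a) ^ 2) := by
      simp only [hv_def]; nlinarith [sq_nonneg ((c - d) * (a - b))]
    have h0 : 0 ≤ η⁻¹ * (u + η * v) ^ 2 := mul_nonneg hηinv.le (sq_nonneg _)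
    have hexp : η⁻¹ * (u + η * v) ^ 2 = η⁻¹ * u ^ 2 + 2 * (u * v) + η * v ^ 2 := by
      field_simp; ring
    have hamgm : -(2 * (u * v)) ≤ η⁻¹ * u ^ 2 + η * v ^ 2 := by
      rw [hexp] at h0; linarith
    have hkey : d * (a ^ 2 - b ^ 2) * (c - d) + c * (b ^ 2 - a ^ 2) * (d - c) = u * v := by
      simp only [hu_def, hv_def]; ring
    have hu2 := mul_le_mul_of_nonneg_left hu hηinv.le
    have hv2 := mul_le_mul_of_nonneg_left hv hη.le
    rw [show -(d * (a ^ 2 - b ^ 2) * (c - d) + c * (b ^ 2 - a ^ 2) * (d - c)) = -(u*v) by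
      rw [hkey]]
    linarith [hamgm, hu2, hv2]
  -- integrate the pointwise bound
  have hintineq : ∫ p : α × α, -(K p + K p.swap) ∂J ≤
      ∫ p : α × α, η⁻¹ * (F1 p + F1 p.swap) + η * (F3 p + F3 p.swap) ∂J := by
    apply integral_mono ((hKint.add hK'int).neg)
      (((h1.add hF1'int).const_mul η⁻¹).add ((h3.add hF3'int).const_mul η))
    exact hpt
  have hL : ∫ p : α × α, -(K p + K p.swap) ∂J = -(2 * ∫ p, K p ∂J) := by
    rw [integral_neg, integral_add hKint hK'int, ← hKswap]; ring
  have hR : ∫ p : α × α, η⁻¹ * (F1 p + F1 p.swap) + η * (F3 p + F3 p.swap) ∂J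
      = η⁻¹ * (2 * ∫ p, F1 p ∂J) + η * (2 * ∫ p, F3 p ∂J) := by
    have i1 : Integrable (fun p : α × α => F1 p + F1 p.swap) J := h1.add hF1'int
    have i3 : Integrable (fun p : α × α => F3 p + F3 p.swap) J := h3.add hF3'int
    rw [integral_add (i1.const_mul η⁻¹) (i3.const_mul η),
      integral_const_mul, integral_const_mul, integral_add h1 hF1'int,
      integral_add h3 hF3'int, ← hF1swap, ← hF3swap]
    ring
  rw [hL, hR] at hintineq
  have hfinal : -(∫ p, K p ∂J) ≤ η⁻¹ * ∫ p, F1 p ∂J + η * ∫ p, F3 p ∂J := by linarith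
  have : ∫ p, F1 p ∂J = ∫ p, F2 p ∂J - ∫ p, K p ∂J := by linarith [hsplit]
  simp only [hF1, hF2, hF3] at hfinal hsplit ⊢
  linarith
end

section
/- Let (M,d,μ) satisfy volume doubling, let φ satisfy the two-sided polynomial growth condition with exponents 0 < β₁ ≤ β₂, and suppose the heat kernel p(t,x,y) of a conservative symmetric Markov process satisfies the upper bound p(t,x,y) ≤ C (1/V(x,φ^{-1}(t)) ∧ t/(V(x,d(x,y))φ(d(x,y)))) for all t > 0 and x, y. Then there is a constant c₁ > 0 such that for all t, r > 0 and all x, ∫_{B(x,r)^c} p(t,x,y) μ(dy) ≤ c₁ t/φ(r). -/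
open MeasureTheory Metric
open scoped ENNReal

/-- Under volume doubling, scaling of `φ`, conservativeness, and the two-sided
    heat-kernel upper bound `UHK(φ)`, the tail estimate
    `∫_{B(x,r)^c} p(t,x,y) μ(dy) ≤ c₁ t/φ(r)` holds. -/
theorem stmt_5 {M : Type*} [MetricSpace M] [MeasurableSpace M]
    (μ : Measure M) (V : M → ℝ → ℝ)
    (hV : ∀ x r, V x r = (μ (ball x r)).toReal)
    (hVpos : ∀ x r, 0 < r → 0 < V x r)
    (Cμ : ℝ) (hCμ : 1 ≤ Cμ)
    (hVD : ∀ x r, 0 < r → V x (2 * r) ≤ Cμ * V x r)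
    (φ φinv : ℝ → ℝ) (hφ0 : φ 0 = 0)
    (hφmono : StrictMonoOn φ (Set.Ici 0)) (hφcont : ContinuousOn φ (Set.Ici 0))
    (c₁' c₂' β₁ β₂ : ℝ) (hc₁' : 0 < c₁') (hc₂' : 0 < c₂') (hβ₁ : 0 < β₁) (hβ : β₁ ≤ β₂)
    (hscale : ∀ r R : ℝ, 0 < r → r ≤ R →
      c₁' * (R / r) ^ β₁ ≤ φ R / φ r ∧ φ R / φ r ≤ c₂' * (R / r) ^ β₂)
    (hφinv : ∀ t, 0 < t → 0 < φinv t ∧ φ (φinv t) = t)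
    (p : ℝ → M → M → ℝ) (hp0 : ∀ t x y, 0 < t → 0 ≤ p t x y)
    (hcons : ∀ t x, 0 < t → ∫ y, p t x y ∂μ = 1)
    (C : ℝ) (hC : 0 < C)
    (hub : ∀ t x y, 0 < t →
      p t x y ≤ C * (1 / V x (φinv t)) ∧
      (x ≠ y → p t x y ≤ C * (t / (V x (dist x y) * φ (dist x y))))) :
    ∃ c₁ : ℝ, 0 < c₁ ∧ ∀ t r : ℝ, 0 < t → 0 < r → ∀ x : M,
      ∫ y in (ball x r)ᶜ, p t x y ∂μ ≤ c₁ * t / φ r := by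
  classical
  set θ : ℝ := ((2:ℝ) ^ β₁)⁻¹ with hθdef
  have h2β : 1 < (2:ℝ) ^ β₁ := by
    rw [Real.one_lt_rpow_iff_of_pos (by norm_num)]
    exact Or.inl ⟨one_lt_two, hβ₁⟩
  have hθ0 : 0 < θ := inv_pos.2 (zero_lt_one.trans h2β)
  have hθ1 : θ < 1 := by
    rw [hθdef, inv_lt_one_iff₀]; right; exact h2β
  have h1θ : 0 < 1 - θ := by linarith
  refine ⟨Cμ * C / (c₁' * (1 - θ)), div_pos (mul_pos (by linarith) hC) (mul_pos hc₁' h1θ), ?_⟩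
  set c₁ : ℝ := Cμ * C / (c₁' * (1 - θ)) with hc₁def
  have hc₁pos : 0 < c₁ := div_pos (mul_pos (by linarith) hC) (mul_pos hc₁' h1θ)
  have hφpos : ∀ s : ℝ, 0 < s → 0 < φ s := by
    intro s hs
    have := hφmono Set.self_mem_Ici (Set.mem_Ici.2 hs.le) hs
    rwa [hφ0] at this
  have hφle : ∀ a b : ℝ, 0 < a → a ≤ b → φ a ≤ φ b := fun a b ha hab =>
    hφmono.monotoneOn (Set.mem_Ici.2 ha.le) (Set.mem_Ici.2 (ha.le.trans hab)) hab
  intro t r ht hr x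
  have hφr : 0 < φ r := hφpos r hr
  have hCt : 0 < C * t := mul_pos hC ht
  -- integrability and measurable version
  have hInt : Integrable (fun y => p t x y) μ := by
    by_contra h
    have h1 := hcons t x ht
    rw [integral_undef h] at h1
    exact zero_ne_one h1
  have hsm := hInt.aestronglyMeasurable
  set q : M → ℝ := hsm.mk (fun y => p t x y) with hqdef
  have hqm : StronglyMeasurable q := hsm.stronglyMeasurable_mk
  have heq : (fun y => p t x y) =ᵐ[μ] q := hsm.ae_eq_mk
  have hN : μ {y | ¬ p t x y = q y} = 0 := ae_iff.mp heq
  -- radii and bounds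
  set R : ℕ → ℝ := fun i => 2 ^ i * r with hRdef
  have hRpos : ∀ i, 0 < R i := fun i => by
    simp only [hRdef]; positivity
  have hrR : ∀ i, r ≤ R i := fun i =>
    le_mul_of_one_le_left hr.le (one_le_pow₀ one_le_two)
  have hVfin : ∀ s : ℝ, 0 < s → μ (ball x s) ≠ ⊤ := by
    intro s hs
    have h := hVpos x s hs
    rw [hV] at h
    exact (ENNReal.toReal_pos_iff.mp h).2.ne
  have hVle : ∀ a b : ℝ, 0 < a → a ≤ b → V x a ≤ V x b := by
    intro a b ha hab
    rw [hV, hV]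
    exact ENNReal.toReal_mono (hVfin b (ha.trans_le hab)) (measure_mono (ball_subset_ball hab))
  set Mi : ℕ → ℝ := fun i => C * t / (V x (R i) * φ (R i)) with hMdef
  have hVRpos : ∀ i, 0 < V x (R i) := fun i => hVpos x _ (hRpos i)
  have hφRpos : ∀ i, 0 < φ (R i) := fun i => hφpos _ (hRpos i)
  have hMpos : ∀ i, 0 < Mi i := fun i => div_pos hCt (mul_pos (hVRpos i) (hφRpos i))
  -- pointwise heat kernel bound on far sets
  have hpb : ∀ (i : ℕ) (y : M), R i ≤ dist y x → p t x y ≤ Mi i := by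
    intro i y hd
    have hd' : 0 < dist x y := by rw [dist_comm]; exact (hRpos i).trans_le hd
    have hxy : x ≠ y := dist_pos.mp hd'
    have h2 := (hub t x y ht).2 hxy
    have hden : V x (R i) * φ (R i) ≤ V x (dist x y) * φ (dist x y) := by
      rw [dist_comm x y]
      exact mul_le_mul (hVle _ _ (hRpos i) hd) (hφle _ _ (hRpos i) hd) (hφRpos i).le
        (hVpos x _ ((hRpos i).trans_le hd)).le
    calc p t x y ≤ C * (t / (V x (dist x y) * φ (dist x y))) := h2
      _ = C * t / (V x (dist x y) * φ (dist x y)) := by ring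
      _ ≤ Mi i := div_le_div_of_nonneg_left hCt.le (mul_pos (hVRpos i) (hφRpos i)) hden
  -- lower bound on φ (R i)
  have hφR : ∀ i : ℕ, c₁' * θ⁻¹ ^ i * φ r ≤ φ (R i) := by
    intro i
    have h := (hscale r (R i) hr (hrR i)).1
    have hRr : R i / r = 2 ^ i := by
      field_simp [hRdef]
      show 2 ^ i * r = r * 2 ^ i
      ring
    rw [hRr] at h
    have hpow : ((2:ℝ) ^ i) ^ β₁ = θ⁻¹ ^ i := by
      rw [hθdef, inv_inv, ← Real.rpow_natCast (2:ℝ) i,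
        ← Real.rpow_natCast ((2:ℝ) ^ β₁) i, ← Real.rpow_mul (by norm_num),
        ← Real.rpow_mul (by norm_num), mul_comm]
    rw [hpow] at h
    exact (le_div_iff₀ hφr).mp h
  have hθipos : ∀ i : ℕ, 0 < θ⁻¹ ^ i := fun i => pow_pos (inv_pos.2 hθ0) i
  have hVxr : 0 < V x r := hVpos x r hr
  -- bound Mi i by geometric sequence
  have hMbound : ∀ i : ℕ, Mi i ≤ C * t / (V x r * (c₁' * φ r)) * θ ^ i := by
    intro i
    have hlowpos : 0 < V x r * (c₁' * θ⁻¹ ^ i * φ r) := by positivity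
    have hlow : V x r * (c₁' * θ⁻¹ ^ i * φ r) ≤ V x (R i) * φ (R i) :=
      mul_le_mul (hVle r (R i) hr (hrR i)) (hφR i) (by positivity) (hVRpos i).le
    have h1 : Mi i ≤ C * t / (V x r * (c₁' * θ⁻¹ ^ i * φ r)) :=
      div_le_div_of_nonneg_left hCt.le hlowpos hlow
    have h2 : C * t / (V x r * (c₁' * θ⁻¹ ^ i * φ r)) = C * t / (V x r * (c₁' * φ r)) * θ ^ i := by
      rw [inv_pow]
      rw [div_mul_eq_mul_div, div_eq_div_iff (by positivity) (by positivity)]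
      field_simp [hθ0.ne']
    linarith [h1, h2.symm.le]
  -- doubling step
  have hdb : ∀ i : ℕ, V x (R (i+1)) ≤ Cμ * V x (R i) := by
    intro i
    have hRe : R (i+1) = 2 * R i := by
      simp only [hRdef, pow_succ]; ring
    rw [hRe]
    exact hVD x (R i) (hRpos i)
  -- key term bound
  have hterm : ∀ i : ℕ, V x (R (i+1)) * Mi i ≤ Cμ * C * t / (c₁' * φ r) * θ ^ i := by
    intro i
    have h1 : V x (R (i+1)) * Mi i ≤ Cμ * V x (R i) * Mi i :=
      mul_le_mul_of_nonneg_right (hdb i) (hMpos i).le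
    have h2 : Cμ * V x (R i) * Mi i = Cμ * (C * t / φ (R i)) := by
      rw [hMdef]
      field_simp [(hVRpos i).ne', (hφRpos i).ne']
    have h3 : C * t / φ (R i) ≤ C * t / (c₁' * θ⁻¹ ^ i * φ r) :=
      div_le_div_of_nonneg_left hCt.le (by positivity) (hφR i)
    have h4 : C * t / (c₁' * θ⁻¹ ^ i * φ r) = C * t / (c₁' * φ r) * θ ^ i := by
      rw [inv_pow]
      rw [div_mul_eq_mul_div, div_eq_div_iff (by positivity) (by positivity)]
      field_simp [hθ0.ne']
    have h5 : Cμ * (C * t / φ (R i)) ≤ Cμ * (C * t / (c₁' * φ r) * θ ^ i) := by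
      apply mul_le_mul_of_nonneg_left _ (by linarith : (0:ℝ) ≤ Cμ)
      rw [← h4]; exact h3
    calc V x (R (i+1)) * Mi i ≤ Cμ * (C * t / φ (R i)) := by rw [← h2]; exact h1
      _ ≤ Cμ * (C * t / (c₁' * φ r) * θ ^ i) := h5
      _ = Cμ * C * t / (c₁' * φ r) * θ ^ i := by ring
  -- the main chain
  set T : Set M := (ball x r)ᶜ with hTdef
  have heqT : (fun y => p t x y) =ᵐ[μ.restrict T] q := ae_restrict_of_ae heq
  have hq0 : 0 ≤ᵐ[μ.restrict T] q :=
    ae_restrict_of_ae (heq.mono fun y hy => hy ▸ hp0 t x y ht)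
  have step1 : ∫ y in T, p t x y ∂μ = (∫⁻ y in T, ENNReal.ofReal (q y) ∂μ).toReal := by
    rw [integral_congr_ae heqT, integral_eq_lintegral_of_nonneg_ae hq0 hqm.aestronglyMeasurable]
  have step2 : ∫⁻ y in T, ENNReal.ofReal (q y) ∂μ
      = ∫⁻ s in Set.Ioi (0:ℝ), (μ.restrict T) {y | s < q y} :=
    lintegral_eq_lintegral_meas_lt (μ.restrict T) hq0 hqm.measurable.aemeasurable
  set G : ℝ → ℝ≥0∞ := fun s =>
    ∑' i : ℕ, (Set.Ioc (Mi (i+1)) (Mi i)).indicator (fun _ => μ (ball x (R (i+1)))) s with hGdef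
  have hpoint : ∀ s : ℝ, s ∈ Set.Ioi (0:ℝ) → (μ.restrict T) {y | s < q y} ≤ G s := by
    intro s hs
    rw [Measure.restrict_apply (measurableSet_lt measurable_const hqm.measurable)]
    by_cases hcase : Mi 0 < s
    · have hsub : {y | s < q y} ∩ T ⊆ {y | ¬ p t x y = q y} := by
        rintro y ⟨hy1, hy2⟩
        intro hpq
        have hd : R 0 ≤ dist y x := by
          have : ¬ dist y x < r := hy2
          simpa [hRdef] using not_lt.mp this
        have hple := hpb 0 y hd
        have : s < p t x y := by rw [hpq]; exact hy1
        linarith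
      calc μ ({y | s < q y} ∩ T) ≤ μ {y | ¬ p t x y = q y} := measure_mono hsub
        _ = 0 := hN
        _ ≤ G s := zero_le
    · push_neg at hcase
      have hex : ∃ i : ℕ, Mi i < s := by
        have hKθ : Filter.Tendsto (fun i : ℕ => C * t / (V x r * (c₁' * φ r)) * θ ^ i)
            Filter.atTop (nhds 0) := by
          simpa using (tendsto_pow_atTop_nhds_zero_of_lt_one hθ0.le hθ1).const_mul
            (C * t / (V x r * (c₁' * φ r)))
        obtain ⟨i, hi⟩ := (hKθ.eventually (gt_mem_nhds hs)).exists
        exact ⟨i, lt_of_le_of_lt (hMbound i) hi⟩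
      have hj : Mi (Nat.find hex) < s := Nat.find_spec hex
      have hj0 : Nat.find hex ≠ 0 := by
        intro h0
        rw [h0] at hj
        exact absurd hj (not_lt.mpr hcase)
      obtain ⟨k, hk⟩ : ∃ k, Nat.find hex = k + 1 :=
        ⟨Nat.find hex - 1, (Nat.succ_pred_eq_of_ne_zero hj0).symm⟩
      have hk1 : Mi (k+1) < s := hk ▸ hj
      have hk2 : s ≤ Mi k := not_lt.mp (Nat.find_min hex (by omega))
      have hsub : {y | s < q y} ∩ T ⊆ {y | ¬ p t x y = q y} ∪ ball x (R (k+1)) := by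
        rintro y ⟨hy1, hy2⟩
        by_cases hyN : p t x y = q y
        · right
          by_contra hyB
          have hd : R (k+1) ≤ dist y x := by
            have : ¬ dist y x < R (k+1) := fun h => hyB (mem_ball.mpr h)
            exact not_lt.mp this
          have hple := hpb (k+1) y hd
          have : s < p t x y := by rw [hyN]; exact hy1
          linarith
        · exact Or.inl hyN
      calc μ ({y | s < q y} ∩ T)
          ≤ μ ({y | ¬ p t x y = q y} ∪ ball x (R (k+1))) := measure_mono hsub
        _ ≤ μ {y | ¬ p t x y = q y} + μ (ball x (R (k+1))) := measure_union_le _ _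
        _ = μ (ball x (R (k+1))) := by rw [hN, zero_add]
        _ ≤ G s := by
            have hmem : s ∈ Set.Ioc (Mi (k+1)) (Mi k) := ⟨hk1, hk2⟩
            have hle := ENNReal.le_tsum (f := fun i : ℕ =>
              (Set.Ioc (Mi (i+1)) (Mi i)).indicator (fun _ => μ (ball x (R (i+1)))) s) k
            rwa [Set.indicator_of_mem hmem] at hle
  have step3 : ∫⁻ s in Set.Ioi (0:ℝ), (μ.restrict T) {y | s < q y}
      ≤ ∫⁻ s in Set.Ioi (0:ℝ), G s :=
    lintegral_mono_ae ((ae_restrict_mem measurableSet_Ioi).mono fun s hs => hpoint s hs)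
  have step4 : ∫⁻ s in Set.Ioi (0:ℝ), G s
      = ∑' i : ℕ, ∫⁻ s in Set.Ioi (0:ℝ),
          (Set.Ioc (Mi (i+1)) (Mi i)).indicator (fun _ => μ (ball x (R (i+1)))) s :=
    lintegral_tsum fun i => (measurable_const.indicator measurableSet_Ioc).aemeasurable
  have step5 : ∀ i : ℕ, ∫⁻ s in Set.Ioi (0:ℝ),
      (Set.Ioc (Mi (i+1)) (Mi i)).indicator (fun _ => μ (ball x (R (i+1)))) s
      ≤ ENNReal.ofReal (Cμ * C * t / (c₁' * φ r) * θ ^ i) := by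
    intro i
    rw [lintegral_indicator measurableSet_Ioc, setLIntegral_const]
    calc μ (ball x (R (i+1))) * (volume.restrict (Set.Ioi (0:ℝ))) (Set.Ioc (Mi (i+1)) (Mi i))
        ≤ μ (ball x (R (i+1))) * ENNReal.ofReal (Mi i) := by
          apply mul_le_mul_right
          calc (volume.restrict (Set.Ioi (0:ℝ))) (Set.Ioc (Mi (i+1)) (Mi i))
              ≤ volume (Set.Ioc (Mi (i+1)) (Mi i)) := Measure.restrict_le_self _
            _ = ENNReal.ofReal (Mi i - Mi (i+1)) := Real.volume_Ioc
            _ ≤ ENNReal.ofReal (Mi i) := ENNReal.ofReal_le_ofReal (by linarith [hMpos (i+1)])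
      _ = ENNReal.ofReal (V x (R (i+1))) * ENNReal.ofReal (Mi i) := by
          rw [hV x (R (i+1)), ENNReal.ofReal_toReal (hVfin _ (hRpos (i+1)))]
      _ = ENNReal.ofReal (V x (R (i+1)) * Mi i) :=
          (ENNReal.ofReal_mul (hVpos x _ (hRpos (i+1))).le).symm
      _ ≤ ENNReal.ofReal (Cμ * C * t / (c₁' * φ r) * θ ^ i) :=
          ENNReal.ofReal_le_ofReal (hterm i)
  have step6 : ∑' i : ℕ, ENNReal.ofReal (Cμ * C * t / (c₁' * φ r) * θ ^ i)
      ≤ ENNReal.ofReal (c₁ * t / φ r) := by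
    have hK' : (0:ℝ) ≤ Cμ * C * t / (c₁' * φ r) := by positivity
    apply le_of_eq
    calc ∑' i : ℕ, ENNReal.ofReal (Cμ * C * t / (c₁' * φ r) * θ ^ i)
        = ∑' i : ℕ, ENNReal.ofReal (Cμ * C * t / (c₁' * φ r)) * (ENNReal.ofReal θ) ^ i := by
          refine tsum_congr fun i => ?_
          rw [ENNReal.ofReal_mul hK', ENNReal.ofReal_pow hθ0.le]
      _ = ENNReal.ofReal (Cμ * C * t / (c₁' * φ r)) * (1 - ENNReal.ofReal θ)⁻¹ := by
          rw [ENNReal.tsum_mul_left, ENNReal.tsum_geometric]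
      _ = ENNReal.ofReal (Cμ * C * t / (c₁' * φ r)) * ENNReal.ofReal ((1 - θ)⁻¹) := by
          rw [← ENNReal.ofReal_one, ← ENNReal.ofReal_sub _ hθ0.le,
            ENNReal.ofReal_inv_of_pos h1θ]
      _ = ENNReal.ofReal (Cμ * C * t / (c₁' * φ r) * (1 - θ)⁻¹) :=
          (ENNReal.ofReal_mul hK').symm
      _ = ENNReal.ofReal (c₁ * t / φ r) := by
          congr 1
          rw [hc₁def]
          field_simp
  rw [step1]
  apply ENNReal.toReal_le_of_le_ofReal (by positivity)
  calc ∫⁻ y in T, ENNReal.ofReal (q y) ∂μ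
      = ∫⁻ s in Set.Ioi (0:ℝ), (μ.restrict T) {y | s < q y} := step2
    _ ≤ ∫⁻ s in Set.Ioi (0:ℝ), G s := step3
    _ = ∑' i : ℕ, ∫⁻ s in Set.Ioi (0:ℝ),
          (Set.Ioc (Mi (i+1)) (Mi i)).indicator (fun _ => μ (ball x (R (i+1)))) s := step4
    _ ≤ ∑' i : ℕ, ENNReal.ofReal (Cμ * C * t / (c₁' * φ r) * θ ^ i) :=
          ENNReal.tsum_le_tsum step5
    _ ≤ ENNReal.ofReal (c₁ * t / φ r) := step6
end

section
/- Suppose a symmetric Markov process on a metric measure space satisfying volume doubling has heat kernel p(t,x,y) satisfying the Faber–Krahn consequence: the Dirichlet heat kernel on any ball B=B(x,r) obeys sup_{x',y' ∈ B} p^B(t,x',y') ≤ (C/V(x,r)) (φ(r)/t)^{1/ν} for some ν ∈ (0,1). Then the mean exit time satisfies E^x[τ_{B(x,r)}] ≤ C₂ φ(r) for all x and r > 0. -/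
open MeasureTheory Metric

/-- The Faber–Krahn type Dirichlet heat kernel bound on balls implies the
    upper mean exit time estimate `E^x[τ_{B(x,r)}] ≤ C₂ φ(r)`. -/
theorem stmt_10 {M : Type*} [MetricSpace M] [MeasurableSpace M]
    (μ : Measure M) (V : M → ℝ → ℝ)
    (hV : ∀ x r, V x r = (μ (ball x r)).toReal)
    (hVpos : ∀ x r, 0 < r → 0 < V x r)
    (Cμ : ℝ) (hCμ : 1 ≤ Cμ)
    (hVD : ∀ x r, 0 < r → V x (2 * r) ≤ Cμ * V x r)
    (φ : ℝ → ℝ) (hφpos : ∀ r, 0 < r → 0 < φ r) (hφmono : Monotone φ)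
    (ν C : ℝ) (hν0 : 0 < ν) (hν1 : ν < 1) (hC : 0 < C)
    (pB : M → ℝ → ℝ → M → M → ℝ)
    (hpB0 : ∀ x r t x' y', 0 ≤ pB x r t x' y')
    (hsup : ∀ x r t, 0 < r → 0 < t → ∀ x' ∈ ball x r, ∀ y' ∈ ball x r,
      pB x r t x' y' ≤ C / V x r * (φ r / t) ^ (1 / ν))
    (Eτ : M → ℝ → ℝ)
    (hE : ∀ x r, 0 < r →
      Eτ x r = ∫ t in Set.Ioi (0 : ℝ), (∫ y in ball x r, pB x r t x y ∂μ))
    (hcontr : ∀ x r t, 0 < r → 0 < t →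
      ∫ y in ball x r, pB x r t x y ∂μ ≤ 1) :
    ∃ C₂ : ℝ, 0 < C₂ ∧ ∀ x r, 0 < r → Eτ x r ≤ C₂ * φ r := by
  set p : ℝ := 1 / ν with hp
  have hp1 : 1 < p := by
    rw [hp, lt_div_iff₀ hν0, one_mul]; exact hν1
  have hp0 : 0 < p := lt_trans one_pos hp1
  have hp1' : 0 < p - 1 := sub_pos.mpr hp1
  refine ⟨1 + C / (p - 1), by positivity, fun x r hr => ?_⟩
  set a : ℝ := φ r with ha
  have ha0 : 0 < a := hφpos r hr
  -- finiteness of the ball measure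
  have hfin : μ (ball x r) < ⊤ := by
    rcases lt_or_eq_of_le (le_top : μ (ball x r) ≤ ⊤) with h | h
    · exact h
    · exfalso
      have := hVpos x r hr
      rw [hV, h, ENNReal.toReal_top] at this
      exact lt_irrefl 0 this
  have hVne : V x r ≠ 0 := (hVpos x r hr).ne'
  -- restrict measure values: for any set T, μ (T ∩ ball) ≤ (μ.restrict ball) T
  have hrestr : ∀ T : Set M, μ (T ∩ ball x r) ≤ μ.restrict (ball x r) T := by
    intro T
    rw [measure_eq_iInf (s := T)]
    refine le_iInf fun A => le_iInf fun hTA => le_iInf fun hA => ?_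
    rw [Measure.restrict_apply hA]
    exact measure_mono (Set.inter_subset_inter_left _ hTA)
  -- the dominating function
  set g : ℝ → ℝ := fun t => if t ≤ a then 1 else C * a ^ p * t ^ (-p) with hg
  have hg0 : ∀ t, 0 ≤ g t := by
    intro t
    simp only [hg]
    split
    · norm_num
    · rename_i h
      push_neg at h
      have ht0 : (0:ℝ) < t := lt_trans ha0 h
      positivity
  -- inner integral bound for large t
  have hinner : ∀ t : ℝ, 0 < t → a < t →
      (∫ y in ball x r, pB x r t x y ∂μ) ≤ C * a ^ p * t ^ (-p) := by
    intro t ht hta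
    set K : ℝ := C / V x r * (a / t) ^ p with hK
    have hK0 : 0 ≤ K := by
      have := (hVpos x r hr)
      positivity
    have hle : ∀ y ∈ ball x r, pB x r t x y ≤ K :=
      fun y hy => hsup x r t hr ht x (mem_ball_self hr) y hy
    by_cases hint : Integrable (fun y => pB x r t x y) (μ.restrict (ball x r))
    · -- a.e. bound w.r.t. the restricted measure
      have hae : ∀ᵐ y ∂μ.restrict (ball x r), pB x r t x y ≤ K := by
        obtain ⟨q, hqm, hfq⟩ := hint.aestronglyMeasurable
        have hqK : ∀ᵐ y ∂μ.restrict (ball x r), q y ≤ K := by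
          rw [ae_iff]
          have hmeas : MeasurableSet {y | ¬ q y ≤ K} := by
            simp only [not_le]
            exact measurableSet_lt measurable_const hqm.measurable
          rw [Measure.restrict_apply hmeas]
          have hsub : {y | ¬ q y ≤ K} ∩ ball x r ⊆
              {y | ¬ pB x r t x y = q y} ∩ ball x r := by
            rintro y ⟨hy1, hy2⟩
            refine ⟨fun h => hy1 ?_, hy2⟩
            rw [← h]; exact hle y hy2
          have hnull : μ.restrict (ball x r) {y | ¬ pB x r t x y = q y} = 0 := by
            rw [← ae_iff]; exact hfq
          exact le_antisymm
            (le_trans (le_trans (measure_mono hsub) (hrestr _)) (le_of_eq hnull))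
            zero_le
        filter_upwards [hqK, hfq] with y h1 h2
        rw [h2]; exact h1
      have hKint : Integrable (fun _ : M => K) (μ.restrict (ball x r)) :=
        integrableOn_const hfin.ne
      have hmono := integral_mono_of_nonneg
        (Filter.Eventually.of_forall (fun y => hpB0 x r t x y)) hKint hae
      calc (∫ y in ball x r, pB x r t x y ∂μ)
          ≤ ∫ _ in ball x r, K ∂μ := hmono
        _ = (μ (ball x r)).toReal * K := by rw [setIntegral_const, smul_eq_mul]; rfl
        _ = C * a ^ p * t ^ (-p) := by
            rw [← hV, hK, Real.div_rpow ha0.le ht.le, Real.rpow_neg ht.le]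
            field_simp
    · rw [integral_undef hint]
      positivity
  -- pointwise bound by g on `Ioi 0`
  have hbound : ∀ t ∈ Set.Ioi (0:ℝ),
      (∫ y in ball x r, pB x r t x y ∂μ) ≤ g t := by
    intro t ht
    simp only [Set.mem_Ioi] at ht
    by_cases hta : t ≤ a
    · simp only [hg, if_pos hta]
      exact hcontr x r t hr ht
    · push_neg at hta
      simp only [hg, if_neg (not_le.mpr hta)]
      exact hinner t ht hta
  -- integrability of g
  have hInt1 : IntegrableOn g (Set.Ioc 0 a) := by
    have hc : IntegrableOn (fun _ : ℝ => (1:ℝ)) (Set.Ioc 0 a) :=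
      integrableOn_const (by simp [Real.volume_Ioc])
    refine hc.congr_fun ?_ measurableSet_Ioc
    intro t ht
    simp [hg, ht.2]
  have hInt2 : IntegrableOn g (Set.Ioi a) := by
    have hc : IntegrableOn (fun t : ℝ => C * a ^ p * t ^ (-p)) (Set.Ioi a) :=
      Integrable.const_mul (integrableOn_Ioi_rpow_of_lt (by linarith : -p < -1) ha0) _
    refine hc.congr_fun ?_ measurableSet_Ioi
    intro t ht
    simp only [Set.mem_Ioi] at ht
    simp [hg, not_le.mpr ht]
  have hgint : IntegrableOn g (Set.Ioi 0) := by
    rw [← Set.Ioc_union_Ioi_eq_Ioi ha0.le]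
    exact hInt1.union hInt2
  -- combine
  rw [hE x r hr]
  have hEle : (∫ t in Set.Ioi (0:ℝ), ∫ y in ball x r, pB x r t x y ∂μ) ≤
      ∫ t in Set.Ioi (0:ℝ), g t := by
    refine integral_mono_of_nonneg
      (Filter.Eventually.of_forall fun t => integral_nonneg fun y => hpB0 x r t x y)
      hgint ?_
    exact (ae_restrict_iff' measurableSet_Ioi).2 (Filter.Eventually.of_forall hbound)
  have hsplit : (∫ t in Set.Ioi (0:ℝ), g t) =
      (∫ t in Set.Ioc (0:ℝ) a, g t) + ∫ t in Set.Ioi a, g t := by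
    rw [← Set.Ioc_union_Ioi_eq_Ioi ha0.le,
      setIntegral_union (Set.Ioc_disjoint_Ioi le_rfl) measurableSet_Ioi hInt1 hInt2]
  have h1 : (∫ t in Set.Ioc (0:ℝ) a, g t) = a := by
    rw [setIntegral_congr_fun measurableSet_Ioc
      (fun t ht => by simp [hg, ht.2] : Set.EqOn g (fun _ => (1:ℝ)) (Set.Ioc 0 a))]
    simp [Real.volume_Ioc, ha0.le]
  have h2 : (∫ t in Set.Ioi a, g t) = C / (p - 1) * a := by
    rw [setIntegral_congr_fun measurableSet_Ioi
      (fun t ht => by simp [hg, not_le.mpr (Set.mem_Ioi.mp ht)] :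
        Set.EqOn g (fun t => C * a ^ p * t ^ (-p)) (Set.Ioi a)),
      integral_const_mul, integral_Ioi_rpow_of_lt (by linarith) ha0]
    have h3 : -a ^ (-p + 1) / (-p + 1) = a ^ (-p + 1) / (p - 1) := by
      rw [div_eq_div_iff (by linarith : (-p + 1) ≠ 0) (ne_of_gt hp1')]; ring
    have h4 : a ^ p * (a ^ (-p + 1)) = a := by
      rw [← Real.rpow_add ha0]; norm_num
    rw [h3, show C * a ^ p * (a ^ (-p + 1) / (p - 1)) =
      C / (p - 1) * (a ^ p * a ^ (-p + 1)) by field_simp, h4]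
  calc (∫ t in Set.Ioi (0:ℝ), ∫ y in ball x r, pB x r t x y ∂μ)
      ≤ ∫ t in Set.Ioi (0:ℝ), g t := hEle
    _ = a + C / (p - 1) * a := by rw [hsplit, h1, h2]
    _ = (1 + C / (p - 1)) * a := by ring
end

section
/- Let (M,d,μ) satisfy volume doubling and let φ satisfy two-sided polynomial growth bounds with exponents 0 < β₁ ≤ β₂ < 2. Suppose the jumping kernel satisfies J(x,y) ≤ c₂/(V(x,d(x,y))φ(d(x,y))). Then for any x₀ ∈ M and 0 < r ≤ R, there exists a Lipschitz-in-distance cut-off function φ₀ for B(x₀,R) ⊂ B(x₀,R+r) (namely φ₀(x) = h(d(x₀,x)) with h ∈ C¹, 0 ≤ h ≤ 1, h = 1 on [0,R], h = 0 on [R+r,∞), |h'| ≤ 2/r) such that for almost every x ∈ M, ∫ (φ₀(x) − φ₀(y))² J(x,y) μ(dy) ≤ c₃/φ(r), where c₃ depends only on the structural constants. -/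
open MeasureTheory Metric intervalIntegral
open scoped ENNReal

noncomputable def cutD : ℝ → ℝ := fun t => 6 * (max 0 (min 1 t)) * (1 - max 0 (min 1 t))

lemma cutD_cont : Continuous cutD := by
  unfold cutD; fun_prop

lemma cutD_nonneg (t : ℝ) : 0 ≤ cutD t := by
  unfold cutD
  have h1 : 0 ≤ max 0 (min 1 t) := le_max_left _ _
  have h2 : max 0 (min 1 t) ≤ 1 := max_le one_pos.le (min_le_left _ _)
  nlinarith

lemma cutD_le (t : ℝ) : cutD t ≤ 3/2 := by
  unfold cutD
  have h1 : 0 ≤ max 0 (min 1 t) := le_max_left _ _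
  have h2 : max 0 (min 1 t) ≤ 1 := max_le one_pos.le (min_le_left _ _)
  nlinarith [sq_nonneg (max 0 (min 1 t) - 1/2)]

lemma cutD_zero_of_nonpos {t : ℝ} (ht : t ≤ 0) : cutD t = 0 := by
  unfold cutD
  have : min 1 t ≤ 0 := le_trans (min_le_right _ _) ht
  rw [max_eq_left this]; ring

lemma cutD_zero_of_one_le {t : ℝ} (ht : 1 ≤ t) : cutD t = 0 := by
  unfold cutD
  rw [min_eq_left ht, max_eq_right one_pos.le]; ring

lemma cutD_intble (a b : ℝ) : IntervalIntegrable cutD MeasureTheory.volume a b :=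
  cutD_cont.intervalIntegrable a b

noncomputable def cutQ : ℝ → ℝ := fun u => ∫ t in (0:ℝ)..u, cutD t

lemma cutQ_hasDerivAt (b : ℝ) : HasDerivAt cutQ (cutD b) b :=
  (cutD_cont.integral_hasStrictDerivAt 0 b).hasDerivAt

lemma cutQ_deriv : deriv cutQ = cutD := funext fun b => (cutQ_hasDerivAt b).deriv

lemma cutQ_contDiff : ContDiff ℝ 1 cutQ :=
  contDiff_one_iff_deriv.mpr ⟨fun b => (cutQ_hasDerivAt b).differentiableAt,
    by rw [cutQ_deriv]; exact cutD_cont⟩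

lemma cutQ_of_nonpos {u : ℝ} (hu : u ≤ 0) : cutQ u = 0 := by
  unfold cutQ
  rw [intervalIntegral.integral_congr (g := fun _ => (0:ℝ))]
  · simp
  · intro t ht
    rw [Set.uIcc_of_ge hu] at ht
    exact cutD_zero_of_nonpos ht.2

lemma cutQ_one : cutQ 1 = 1 := by
  unfold cutQ
  rw [intervalIntegral.integral_congr (g := fun t => 6*t - 6*t^2)]
  · have i1 : IntervalIntegrable (fun t : ℝ => 6*t) MeasureTheory.volume 0 1 :=
      (by fun_prop : Continuous fun t : ℝ => 6*t).intervalIntegrable _ _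
    have i2 : IntervalIntegrable (fun t : ℝ => 6*t^2) MeasureTheory.volume 0 1 :=
      (by fun_prop : Continuous fun t : ℝ => 6*t^2).intervalIntegrable _ _
    rw [intervalIntegral.integral_sub i1 i2,
      intervalIntegral.integral_const_mul, intervalIntegral.integral_const_mul,
      integral_id, integral_pow]
    norm_num
  · intro t ht
    rw [Set.uIcc_of_le one_pos.le] at ht
    unfold cutD
    rw [min_eq_right ht.2, max_eq_right ht.1]
    ring

lemma cutQ_of_one_le {u : ℝ} (hu : 1 ≤ u) : cutQ u = 1 := by
  have hadd := intervalIntegral.integral_add_adjacent_intervals (cutD_intble 0 1) (cutD_intble 1 u)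
  have h2 : (∫ t in (1:ℝ)..u, cutD t) = 0 := by
    rw [intervalIntegral.integral_congr (g := fun _ => (0:ℝ))]
    · simp
    · intro t ht
      rw [Set.uIcc_of_le hu] at ht
      exact cutD_zero_of_one_le ht.1
  have h1 : (∫ t in (0:ℝ)..1, cutD t) = 1 := cutQ_one
  unfold cutQ
  rw [← hadd, h1, h2]; ring

lemma cutQ_mono : Monotone cutQ := by
  intro u v huv
  have hadd := intervalIntegral.integral_add_adjacent_intervals (cutD_intble 0 u) (cutD_intble u v)
  have hnn : 0 ≤ ∫ t in u..v, cutD t :=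
    intervalIntegral.integral_nonneg huv (fun t _ => cutD_nonneg t)
  unfold cutQ
  rw [← hadd]; linarith

lemma cutQ_nonneg (u : ℝ) : 0 ≤ cutQ u := by
  rcases le_or_gt u 0 with h | h
  · rw [cutQ_of_nonpos h]
  · rw [← cutQ_of_nonpos (le_refl 0)]; exact cutQ_mono h.le

lemma cutQ_le_one (u : ℝ) : cutQ u ≤ 1 := by
  rcases le_or_gt 1 u with h | h
  · rw [cutQ_of_one_le h]
  · rw [← cutQ_of_one_le (le_refl 1)]; exact cutQ_mono h.le

noncomputable def cutH (R r : ℝ) : ℝ → ℝ := fun s => 1 - cutQ ((s - R)/r)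

lemma cutH_hasDerivAt (R r : ℝ) (s : ℝ) :
    HasDerivAt (cutH R r) (0 - cutD ((s - R)/r) * (1/r)) s := by
  have hinner : HasDerivAt (fun s : ℝ => (s - R)/r) (1/r) s := by
    simpa using ((hasDerivAt_id s).sub_const R).div_const r
  have hcomp : HasDerivAt (fun s : ℝ => cutQ ((s - R)/r)) (cutD ((s - R)/r) * (1/r)) s :=
    by have := (cutQ_hasDerivAt ((s - R)/r)).comp s hinner; exact this
  exact (hasDerivAt_const s (1:ℝ)).sub hcomp

lemma cutH_deriv (R r : ℝ) (s : ℝ) : deriv (cutH R r) s = 0 - cutD ((s - R)/r) * (1/r) :=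
  (cutH_hasDerivAt R r s).deriv

lemma cutH_contDiff (R r : ℝ) : ContDiff ℝ 1 (cutH R r) :=
  contDiff_one_iff_deriv.mpr ⟨fun s => (cutH_hasDerivAt R r s).differentiableAt, by
    have : deriv (cutH R r) = fun s => 0 - cutD ((s - R)/r) * (1/r) :=
      funext fun s => cutH_deriv R r s
    rw [this]
    exact continuous_const.sub ((cutD_cont.comp (by fun_prop)).mul continuous_const)⟩

lemma cutH_mem_Icc (R r : ℝ) (s : ℝ) : 0 ≤ cutH R r s ∧ cutH R r s ≤ 1 := by
  unfold cutH
  constructor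
  · linarith [cutQ_le_one ((s - R)/r)]
  · linarith [cutQ_nonneg ((s - R)/r)]

lemma cutH_eq_one {R r : ℝ} (hr : 0 < r) {s : ℝ} (hs : s ≤ R) : cutH R r s = 1 := by
  unfold cutH
  rw [cutQ_of_nonpos (div_nonpos_of_nonpos_of_nonneg (by linarith) hr.le)]
  ring

lemma cutH_eq_zero {R r : ℝ} (hr : 0 < r) {s : ℝ} (hs : R + r ≤ s) : cutH R r s = 0 := by
  unfold cutH
  rw [cutQ_of_one_le ((le_div_iff₀ hr).mpr (by linarith))]
  ring

lemma cutH_deriv_abs_le {R r : ℝ} (hr : 0 < r) (s : ℝ) : |deriv (cutH R r) s| ≤ 2 / r := by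
  rw [cutH_deriv]
  have h1 : 0 ≤ cutD ((s - R)/r) * (1/r) :=
    mul_nonneg (cutD_nonneg _) (by positivity)
  rw [abs_of_nonpos (by linarith), neg_sub, sub_zero]
  have h2 : cutD ((s - R)/r) * (1/r) ≤ (3/2) * (1/r) :=
    mul_le_mul_of_nonneg_right (cutD_le _) (by positivity)
  have h3 : (3/2 : ℝ) * (1/r) ≤ 2 / r := by
    rw [div_eq_mul_one_div 2 r]
    exact mul_le_mul_of_nonneg_right (by norm_num) (by positivity)
  linarith

lemma cutH_lip {R r : ℝ} (hr : 0 < r) (s t : ℝ) :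
    |cutH R r s - cutH R r t| ≤ 2 / r * |s - t| := by
  have := Convex.norm_image_sub_le_of_norm_deriv_le (𝕜 := ℝ) (f := cutH R r) (s := Set.univ)
    (fun z _ => (cutH_hasDerivAt R r z).differentiableAt)
    (fun z _ => by rw [Real.norm_eq_abs]; exact cutH_deriv_abs_le hr z)
    convex_univ (Set.mem_univ t) (Set.mem_univ s)
  simpa [Real.norm_eq_abs] using this
set_option maxHeartbeats 1000000 in
/-- When `β₂ < 2`, the distance-based `C¹` cut-off function for
    `B(x₀,R) ⊂ B(x₀,R+r)` has jump energy density bounded by `c₃/φ(r)`. -/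
theorem stmt_16 {M : Type*} [MetricSpace M] [MeasurableSpace M]
    (μ : Measure M) (V : M → ℝ → ℝ)
    (hV : ∀ x r, V x r = (μ (ball x r)).toReal)
    (hVpos : ∀ x r, 0 < r → 0 < V x r)
    (Cμ : ℝ) (hCμ : 1 ≤ Cμ)
    (hVD : ∀ x r, 0 < r → V x (2 * r) ≤ Cμ * V x r)
    (φ : ℝ → ℝ) (hφ0 : φ 0 = 0)
    (hφmono : StrictMonoOn φ (Set.Ici 0)) (hφcont : ContinuousOn φ (Set.Ici 0))
    (c₁ c₂' β₁ β₂ : ℝ) (hc₁ : 0 < c₁) (hc₂' : 0 < c₂')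
    (hβ₁ : 0 < β₁) (hβ : β₁ ≤ β₂) (hβ₂ : β₂ < 2)
    (hscale : ∀ r R : ℝ, 0 < r → r ≤ R →
      c₁ * (R / r) ^ β₁ ≤ φ R / φ r ∧ φ R / φ r ≤ c₂' * (R / r) ^ β₂)
    (c₂ : ℝ) (hc₂ : 0 < c₂)
    (J : M → M → ℝ) (hJ0 : ∀ x y, 0 ≤ J x y) (hJsym : ∀ x y, J x y = J y x)
    (hJle : ∀ x y, x ≠ y → J x y ≤ c₂ / (V x (dist x y) * φ (dist x y))) :
    ∃ c₃ : ℝ, 0 < c₃ ∧ ∀ x₀ : M, ∀ r R : ℝ, 0 < r → r ≤ R →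
      ∃ h : ℝ → ℝ, ContDiff ℝ 1 h ∧
        (∀ s, 0 ≤ h s ∧ h s ≤ 1) ∧
        (∀ s, 0 ≤ s → s ≤ R → h s = 1) ∧
        (∀ s, R + r ≤ s → h s = 0) ∧
        (∀ s, |deriv h s| ≤ 2 / r) ∧
        ∀ x : M,
          ∫⁻ y, ENNReal.ofReal ((h (dist x₀ x) - h (dist x₀ y)) ^ 2 * J x y) ∂μ
            ≤ ENNReal.ofReal (c₃ / φ r) := by
  have hCμ0 : (0:ℝ) < Cμ := lt_of_lt_of_le one_pos hCμ
  -- geometric ratios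
  have hρ₁pos : (0:ℝ) < (2:ℝ) ^ (-β₁) := Real.rpow_pos_of_pos two_pos _
  have hρ₁lt : (2:ℝ) ^ (-β₁) < 1 :=
    Real.rpow_lt_one_of_one_lt_of_neg one_lt_two (by linarith)
  have hρ₂pos : (0:ℝ) < (2:ℝ) ^ (β₂ - 2) := Real.rpow_pos_of_pos two_pos _
  have hρ₂lt : (2:ℝ) ^ (β₂ - 2) < 1 :=
    Real.rpow_lt_one_of_one_lt_of_neg one_lt_two (by linarith)
  set ρ₁ : ℝ := (2:ℝ) ^ (-β₁) with hρ₁def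
  set ρ₂ : ℝ := (2:ℝ) ^ (β₂ - 2) with hρ₂def
  set K₁ : ℝ := c₂ * Cμ / c₁ with hK₁def
  set K₂ : ℝ := 16 * (c₂ * Cμ * c₂') with hK₂def
  have hK₁ : 0 < K₁ := by positivity
  have hK₂ : 0 < K₂ := by positivity
  have h1ρ₁ : (0:ℝ) < 1 - ρ₁ := by linarith
  have h1ρ₂ : (0:ℝ) < 1 - ρ₂ := by linarith
  refine ⟨K₁ * (1 - ρ₁)⁻¹ + K₂ * (1 - ρ₂)⁻¹, by positivity, ?_⟩
  intro x₀ r R hr hrR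
  -- basic positivity facts
  have hφpos : ∀ s : ℝ, 0 < s → 0 < φ s := fun s hs => by
    have := hφmono (Set.self_mem_Ici) (Set.mem_Ici.mpr hs.le) hs
    rwa [hφ0] at this
  have hφr : 0 < φ r := hφpos r hr
  have hfin : ∀ (z : M) (s : ℝ), 0 < s → μ (ball z s) ≠ ⊤ := by
    intro z s hs hcon
    have := hVpos z s hs
    rw [hV z s, hcon] at this
    simp at this
  have hμball : ∀ (z : M) (s : ℝ), 0 < s → μ (ball z s) = ENNReal.ofReal (V z s) := by
    intro z s hs
    rw [hV z s]
    exact (ENNReal.ofReal_toReal (hfin z s hs)).symm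
  have hVmono : ∀ (z : M) (s t : ℝ), 0 < s → s ≤ t → V z s ≤ V z t := by
    intro z s t hs hst
    rw [hV z s, hV z t]
    exact ENNReal.toReal_mono (hfin z t (lt_of_lt_of_le hs hst))
      (measure_mono (ball_subset_ball hst))
  have hφmono' : ∀ s t : ℝ, 0 ≤ s → s ≤ t → φ s ≤ φ t := fun s t hs hst =>
    hφmono.monotoneOn (Set.mem_Ici.mpr hs) (Set.mem_Ici.mpr (hs.trans hst)) hst
  refine ⟨cutH R r, cutH_contDiff R r, cutH_mem_Icc R r,
    fun s _ hs => cutH_eq_one hr hs, fun s hs => cutH_eq_zero hr hs,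
    fun s => cutH_deriv_abs_le hr s, ?_⟩
  intro x
  -- annuli and dominating constants
  set A : ℤ → Set M := fun i =>
    {y | (2:ℝ)^i * r ≤ dist x y ∧ dist x y < (2:ℝ)^(i+1) * r} with hAdef
  set κ : ℤ → ℝ≥0∞ := fun i => ENNReal.ofReal
    ((if 0 ≤ i then (1:ℝ) else 16 * (4:ℝ)^i) * c₂
      / (V x ((2:ℝ)^i * r) * φ ((2:ℝ)^i * r))) with hκdef
  choose B hBsub hBmeas hBeq using fun i => exists_measurable_superset μ (A i)
  -- pointwise domination
  have hpt : ∀ y : M,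
      ENNReal.ofReal ((cutH R r (dist x₀ x) - cutH R r (dist x₀ y)) ^ 2 * J x y)
        ≤ ∑' i : ℤ, (B i).indicator (fun _ => κ i) y := by
    intro y
    by_cases hxy : x = y
    · subst hxy; simp
    · have hd : 0 < dist x y := dist_pos.mpr hxy
      have hdr : 0 < dist x y / r := div_pos hd hr
      set i : ℤ := ⌊Real.logb 2 (dist x y / r)⌋ with hidef
      have h1 : (2:ℝ)^i ≤ dist x y / r := by
        calc (2:ℝ)^i = (2:ℝ)^((i:ℝ)) := (Real.rpow_intCast 2 i).symm
        _ ≤ (2:ℝ)^(Real.logb 2 (dist x y / r)) :=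
            Real.rpow_le_rpow_of_exponent_le one_le_two (Int.floor_le _)
        _ = dist x y / r := Real.rpow_logb two_pos (by norm_num) hdr
      have h2 : dist x y / r < (2:ℝ)^(i+1) := by
        calc dist x y / r = (2:ℝ)^(Real.logb 2 (dist x y / r)) :=
              (Real.rpow_logb two_pos (by norm_num) hdr).symm
        _ < (2:ℝ)^(((i:ℝ))+1) := by
            apply Real.rpow_lt_rpow_of_exponent_lt one_lt_two
            exact Int.lt_floor_add_one _
        _ = (2:ℝ)^(i+1) := by
            rw [← Real.rpow_intCast 2 (i+1)]; push_cast; ring_nf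
      have hyA : y ∈ A i := ⟨(le_div_iff₀ hr).mp h1, (div_lt_iff₀ hr).mp h2⟩
      have hsi : (0:ℝ) < (2:ℝ)^i * r := by positivity
      have hVi : 0 < V x ((2:ℝ)^i * r) := hVpos x _ hsi
      have hφi : 0 < φ ((2:ℝ)^i * r) := hφpos _ hsi
      have hVd : 0 < V x (dist x y) := hVpos x _ hd
      have hJ' : J x y ≤ c₂ / (V x ((2:ℝ)^i*r) * φ ((2:ℝ)^i*r)) := by
        refine le_trans (hJle x y hxy) ?_
        refine div_le_div_of_nonneg_left hc₂.le (by positivity) ?_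
        exact mul_le_mul (hVmono x _ _ hsi hyA.1) (hφmono' _ _ hsi.le hyA.1)
          hφi.le hVd.le
      have hw : (cutH R r (dist x₀ x) - cutH R r (dist x₀ y)) ^ 2
          ≤ (if 0 ≤ i then (1:ℝ) else 16 * (4:ℝ)^i) := by
        by_cases hi : 0 ≤ i
        · simp only [hi, if_true]
          obtain ⟨ha0, ha1⟩ := cutH_mem_Icc R r (dist x₀ x)
          obtain ⟨hb0, hb1⟩ := cutH_mem_Icc R r (dist x₀ y)
          nlinarith
        · simp only [hi, if_false]
          have hlip := cutH_lip (R := R) hr (dist x₀ x) (dist x₀ y)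
          have habs : |dist x₀ x - dist x₀ y| ≤ dist x y := by
            rw [dist_comm x₀ x, dist_comm x₀ y]; exact abs_dist_sub_le x y x₀
          have hlip2 : |cutH R r (dist x₀ x) - cutH R r (dist x₀ y)| ≤ 2/r * dist x y :=
            le_trans hlip (mul_le_mul_of_nonneg_left habs (by positivity))
          have h2i : (2:ℝ)^(i+1) = 2 * (2:ℝ)^i := by
            rw [zpow_add_one₀ (two_ne_zero)]; ring
          have hd2 : dist x y ≤ 2 * ((2:ℝ)^i) * r := by
            have := hyA.2; rw [h2i] at this; linarith
          have h4 : (4:ℝ)^i = (2:ℝ)^i * (2:ℝ)^i := by rw [← mul_zpow]; norm_num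
          have h2ipos : (0:ℝ) < (2:ℝ)^i := by positivity
          have hsq : (cutH R r (dist x₀ x) - cutH R r (dist x₀ y))^2
              ≤ (2/r * dist x y)^2 := by
            rw [← sq_abs]
            exact pow_le_pow_left₀ (abs_nonneg _) hlip2 2
          have hfin2 : (2/r * dist x y)^2 ≤ 16 * (4:ℝ)^i := by
            rw [h4, div_mul_eq_mul_div, div_pow, div_le_iff₀ (by positivity)]
            have hmul := mul_le_mul hd2 hd2 hd.le (by positivity : (0:ℝ) ≤ 2 * (2:ℝ)^i * r)
            nlinarith [hmul]
          linarith
      have hwnn : (0:ℝ) ≤ (if 0 ≤ i then (1:ℝ) else 16 * (4:ℝ)^i) := by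
        by_cases hi : 0 ≤ i <;> simp [hi] <;> positivity
      have hmain : (cutH R r (dist x₀ x) - cutH R r (dist x₀ y)) ^ 2 * J x y
          ≤ (if 0 ≤ i then (1:ℝ) else 16 * (4:ℝ)^i) * c₂
            / (V x ((2:ℝ)^i * r) * φ ((2:ℝ)^i * r)) := by
        calc (cutH R r (dist x₀ x) - cutH R r (dist x₀ y)) ^ 2 * J x y
            ≤ (if 0 ≤ i then (1:ℝ) else 16 * (4:ℝ)^i)
              * (c₂ / (V x ((2:ℝ)^i*r) * φ ((2:ℝ)^i*r))) :=
              mul_le_mul hw hJ' (hJ0 x y) hwnn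
        _ = _ := (mul_div_assoc _ _ _).symm
      calc ENNReal.ofReal ((cutH R r (dist x₀ x) - cutH R r (dist x₀ y)) ^ 2 * J x y)
          ≤ κ i := ENNReal.ofReal_le_ofReal hmain
      _ = (B i).indicator (fun _ => κ i) y :=
          (Set.indicator_of_mem (hBsub i hyA) (fun _ => κ i)).symm
      _ ≤ ∑' j : ℤ, (B j).indicator (fun _ => κ j) y := ENNReal.le_tsum i
  -- integrate
  have hstep1 : (∫⁻ y, ENNReal.ofReal
        ((cutH R r (dist x₀ x) - cutH R r (dist x₀ y)) ^ 2 * J x y) ∂μ)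
      ≤ ∑' i : ℤ, κ i * μ (A i) := by
    calc (∫⁻ y, ENNReal.ofReal
          ((cutH R r (dist x₀ x) - cutH R r (dist x₀ y)) ^ 2 * J x y) ∂μ)
        ≤ ∫⁻ y, ∑' i : ℤ, (B i).indicator (fun _ => κ i) y ∂μ := lintegral_mono hpt
    _ = ∑' i : ℤ, ∫⁻ y, (B i).indicator (fun _ => κ i) y ∂μ :=
        lintegral_tsum (fun i => (measurable_const.indicator (hBmeas i)).aemeasurable)
    _ = ∑' i : ℤ, κ i * μ (B i) :=
        tsum_congr fun i => lintegral_indicator_const (hBmeas i) (κ i)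
    _ = ∑' i : ℤ, κ i * μ (A i) := tsum_congr fun i => by rw [hBeq i]
  -- per-annulus bound
  have hterm : ∀ i : ℤ, κ i * μ (A i) ≤ ENNReal.ofReal
      ((if 0 ≤ i then K₁ * ρ₁ ^ i.natAbs else K₂ * ρ₂ ^ i.natAbs) / φ r) := by
    intro i
    have hsi : (0:ℝ) < (2:ℝ)^i * r := by positivity
    have hVi : 0 < V x ((2:ℝ)^i * r) := hVpos x _ hsi
    have hφi : 0 < φ ((2:ℝ)^i * r) := hφpos _ hsi
    have hwnn : (0:ℝ) ≤ (if 0 ≤ i then (1:ℝ) else 16 * (4:ℝ)^i) := by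
      by_cases hi : 0 ≤ i <;> simp [hi] <;> positivity
    have hμA : μ (A i) ≤ ENNReal.ofReal (V x ((2:ℝ)^(i+1) * r)) := by
      have hsub : A i ⊆ ball x ((2:ℝ)^(i+1) * r) := fun y hy => by
        rw [mem_ball, dist_comm]; exact hy.2
      refine le_trans (measure_mono hsub) ?_
      rw [hμball x _ (by positivity)]
    have step1 : κ i * μ (A i) ≤ ENNReal.ofReal
        (((if 0 ≤ i then (1:ℝ) else 16 * (4:ℝ)^i) * c₂
          / (V x ((2:ℝ)^i * r) * φ ((2:ℝ)^i * r))) * V x ((2:ℝ)^(i+1) * r)) := by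
      refine le_trans (mul_le_mul_right hμA _) ?_
      rw [hκdef, ENNReal.ofReal_mul (by positivity)]
    refine le_trans step1 (ENNReal.ofReal_le_ofReal ?_)
    have hV2 : V x ((2:ℝ)^(i+1) * r) ≤ Cμ * V x ((2:ℝ)^i * r) := by
      have he : (2:ℝ)^(i+1) * r = 2 * ((2:ℝ)^i * r) := by
        rw [zpow_add_one₀ (two_ne_zero)]; ring
      rw [he]; exact hVD x _ hsi
    have hred : ((if 0 ≤ i then (1:ℝ) else 16 * (4:ℝ)^i) * c₂
          / (V x ((2:ℝ)^i * r) * φ ((2:ℝ)^i * r))) * V x ((2:ℝ)^(i+1) * r)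
        ≤ (if 0 ≤ i then (1:ℝ) else 16 * (4:ℝ)^i) * c₂ * Cμ / φ ((2:ℝ)^i * r) := by
      have h1 : ((if 0 ≤ i then (1:ℝ) else 16 * (4:ℝ)^i) * c₂
            / (V x ((2:ℝ)^i * r) * φ ((2:ℝ)^i * r))) * V x ((2:ℝ)^(i+1) * r)
          ≤ ((if 0 ≤ i then (1:ℝ) else 16 * (4:ℝ)^i) * c₂
            / (V x ((2:ℝ)^i * r) * φ ((2:ℝ)^i * r))) * (Cμ * V x ((2:ℝ)^i * r)) :=
        mul_le_mul_of_nonneg_left hV2 (by positivity)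
      have h2 : ((if 0 ≤ i then (1:ℝ) else 16 * (4:ℝ)^i) * c₂
            / (V x ((2:ℝ)^i * r) * φ ((2:ℝ)^i * r))) * (Cμ * V x ((2:ℝ)^i * r))
          = (if 0 ≤ i then (1:ℝ) else 16 * (4:ℝ)^i) * c₂ * Cμ / φ ((2:ℝ)^i * r) := by
        field_simp
      linarith
    refine le_trans hred ?_
    by_cases hi : 0 ≤ i
    · simp only [hi, if_true]
      have h2i1 : (1:ℝ) ≤ (2:ℝ)^i := one_le_zpow₀ one_le_two hi
      have hs := (hscale r ((2:ℝ)^i * r) hr (by nlinarith [mul_le_mul_of_nonneg_right h2i1 hr.le])).1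
      have hq : ((2:ℝ)^i * r) / r = (2:ℝ)^i := mul_div_cancel_right₀ _ hr.ne'
      rw [hq] at hs
      have hPpos : (0:ℝ) < ((2:ℝ)^i) ^ β₁ := Real.rpow_pos_of_pos (by positivity) _
      have hφge : c₁ * ((2:ℝ)^i) ^ β₁ * φ r ≤ φ ((2:ℝ)^i * r) :=
        (le_div_iff₀ hφr).mp hs
      have hcast : ((i.natAbs : ℝ)) = (i : ℝ) := by
        rw [Nat.cast_natAbs]; exact congrArg (Int.cast : ℤ → ℝ) (abs_of_nonneg hi)
      have hρn : ρ₁ ^ i.natAbs = (((2:ℝ)^i) ^ β₁)⁻¹ := by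
        have e1 : ρ₁ ^ i.natAbs = (2:ℝ) ^ (-β₁ * (i.natAbs : ℝ)) := by
          rw [← Real.rpow_natCast ρ₁ i.natAbs, hρ₁def,
            ← Real.rpow_mul (by norm_num : (0:ℝ) ≤ 2)]
        have e2 : ((2:ℝ)^i) ^ β₁ = (2:ℝ) ^ ((i:ℝ) * β₁) := by
          rw [← Real.rpow_intCast 2 i, ← Real.rpow_mul (by norm_num : (0:ℝ) ≤ 2)]
        rw [e1, e2, ← Real.rpow_neg (by norm_num : (0:ℝ) ≤ 2), hcast]
        congr 1 <;> ring_nf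
      calc (1:ℝ) * c₂ * Cμ / φ ((2:ℝ)^i * r) = c₂ * Cμ / φ ((2:ℝ)^i * r) := by ring_nf
      _ ≤ c₂ * Cμ / (c₁ * ((2:ℝ)^i) ^ β₁ * φ r) :=
          div_le_div_of_nonneg_left (by positivity) (by positivity) hφge
      _ = K₁ * ρ₁ ^ i.natAbs / φ r := by
          rw [hρn, hK₁def]; field_simp
    · simp only [hi, if_false]
      push_neg at hi
      have h2i1 : (2:ℝ)^i ≤ 1 := zpow_le_one_of_nonpos₀ one_le_two hi.le
      have h2ipos : (0:ℝ) < (2:ℝ)^i := by positivity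
      have hs := (hscale ((2:ℝ)^i * r) r hsi (by nlinarith [mul_le_mul_of_nonneg_right h2i1 hr.le])).2
      have hq : r / ((2:ℝ)^i * r) = ((2:ℝ)^i)⁻¹ := by
        rw [mul_comm, div_mul_eq_div_div, div_self hr.ne', one_div]
      rw [hq] at hs
      have hQpos : (0:ℝ) < (((2:ℝ)^i)⁻¹) ^ β₂ := Real.rpow_pos_of_pos (by positivity) _
      have key : φ r ≤ c₂' * (((2:ℝ)^i)⁻¹) ^ β₂ * φ ((2:ℝ)^i * r) := by
        rw [div_le_iff₀ hφi] at hs; linarith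
      have hinv : 1 / φ ((2:ℝ)^i * r) ≤ c₂' * (((2:ℝ)^i)⁻¹) ^ β₂ / φ r := by
        rw [div_le_div_iff₀ hφi hφr]; nlinarith
      have hcast : ((i.natAbs : ℝ)) = -(i : ℝ) := by
        rw [Nat.cast_natAbs, abs_of_nonpos hi.le]; push_cast; ring
      have hprod : (4:ℝ)^i * (((2:ℝ)^i)⁻¹) ^ β₂ = ρ₂ ^ i.natAbs := by
        have e1 : (4:ℝ)^i = (2:ℝ) ^ ((i:ℝ) * 2) := by
          have : (4:ℝ)^i = (2:ℝ)^i * (2:ℝ)^i := by rw [← mul_zpow]; norm_num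
          rw [this, ← Real.rpow_intCast 2 i, ← Real.rpow_add two_pos]
          congr 1; ring
        have e2 : (((2:ℝ)^i)⁻¹) ^ β₂ = (2:ℝ) ^ (-(i:ℝ) * β₂) := by
          rw [← Real.rpow_intCast 2 i, ← Real.rpow_neg (by norm_num : (0:ℝ) ≤ 2),
            ← Real.rpow_mul (by norm_num : (0:ℝ) ≤ 2)]
        have e3 : ρ₂ ^ i.natAbs = (2:ℝ) ^ ((β₂ - 2) * (i.natAbs : ℝ)) := by
          rw [← Real.rpow_natCast ρ₂ i.natAbs, hρ₂def,
            ← Real.rpow_mul (by norm_num : (0:ℝ) ≤ 2)]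
        rw [e1, e2, e3, ← Real.rpow_add two_pos, hcast]
        congr 1 <;> ring_nf
      have h4ipos : (0:ℝ) < (4:ℝ)^i := by positivity
      calc 16 * (4:ℝ)^i * c₂ * Cμ / φ ((2:ℝ)^i * r)
          = (16 * (4:ℝ)^i * c₂ * Cμ) * (1 / φ ((2:ℝ)^i * r)) := by ring
      _ ≤ (16 * (4:ℝ)^i * c₂ * Cμ) * (c₂' * (((2:ℝ)^i)⁻¹) ^ β₂ / φ r) :=
          mul_le_mul_of_nonneg_left hinv (by positivity)
      _ = K₂ * ((4:ℝ)^i * (((2:ℝ)^i)⁻¹) ^ β₂) / φ r := by rw [hK₂def]; ring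
      _ = K₂ * ρ₂ ^ i.natAbs / φ r := by rw [hprod]
  -- sum the series
  have hstep2 : (∑' i : ℤ, κ i * μ (A i))
      ≤ ENNReal.ofReal ((K₁ * (1 - ρ₁)⁻¹ + K₂ * (1 - ρ₂)⁻¹) / φ r) := by
    refine le_trans (ENNReal.tsum_le_tsum hterm) ?_
    rw [tsum_of_nat_of_neg_add_one ENNReal.summable ENNReal.summable]
    have hS1 : (∑' n : ℕ, ENNReal.ofReal
        ((if 0 ≤ ((n:ℤ)) then K₁ * ρ₁ ^ ((n:ℤ)).natAbs else K₂ * ρ₂ ^ ((n:ℤ)).natAbs) / φ r))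
        = ENNReal.ofReal (K₁ / φ r) * (1 - ENNReal.ofReal ρ₁)⁻¹ := by
      have he : ∀ n : ℕ, ENNReal.ofReal
          ((if 0 ≤ ((n:ℤ)) then K₁ * ρ₁ ^ ((n:ℤ)).natAbs else K₂ * ρ₂ ^ ((n:ℤ)).natAbs) / φ r)
          = ENNReal.ofReal (K₁ / φ r) * (ENNReal.ofReal ρ₁) ^ n := by
        intro n
        rw [if_pos (Int.ofNat_nonneg n), Int.natAbs_natCast,
          show K₁ * ρ₁ ^ n / φ r = (K₁ / φ r) * ρ₁ ^ n by ring,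
          ENNReal.ofReal_mul (by positivity), ENNReal.ofReal_pow hρ₁pos.le]
      rw [tsum_congr he, ENNReal.tsum_mul_left, ENNReal.tsum_geometric]
    have hS2 : (∑' n : ℕ, ENNReal.ofReal
        ((if 0 ≤ (-((n:ℤ)+1)) then K₁ * ρ₁ ^ (-((n:ℤ)+1)).natAbs
          else K₂ * ρ₂ ^ (-((n:ℤ)+1)).natAbs) / φ r))
        ≤ ENNReal.ofReal (K₂ / φ r) * (1 - ENNReal.ofReal ρ₂)⁻¹ := by
      have hle : ∀ n : ℕ, ENNReal.ofReal
          ((if 0 ≤ (-((n:ℤ)+1)) then K₁ * ρ₁ ^ (-((n:ℤ)+1)).natAbs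
            else K₂ * ρ₂ ^ (-((n:ℤ)+1)).natAbs) / φ r)
          ≤ ENNReal.ofReal (K₂ / φ r) * (ENNReal.ofReal ρ₂) ^ n := by
        intro n
        have hcond : ¬ (0:ℤ) ≤ -((n:ℤ)+1) := by omega
        have hnat : (-((n:ℤ)+1)).natAbs = n + 1 := by omega
        rw [if_neg hcond, hnat]
        have hre : K₂ * ρ₂ ^ (n+1) / φ r ≤ (K₂ / φ r) * ρ₂ ^ n := by
          have hpow : ρ₂ ^ (n+1) ≤ ρ₂ ^ n :=
            pow_le_pow_of_le_one hρ₂pos.le hρ₂lt.le (Nat.le_succ n)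
          rw [div_mul_eq_mul_div]
          exact div_le_div_of_nonneg_right (by nlinarith) hφr.le
        refine le_trans (ENNReal.ofReal_le_ofReal hre) ?_
        rw [ENNReal.ofReal_mul (by positivity), ENNReal.ofReal_pow hρ₂pos.le]
      refine le_trans (ENNReal.tsum_le_tsum hle) ?_
      rw [ENNReal.tsum_mul_left, ENNReal.tsum_geometric]
    have hconv : ∀ ρ : ℝ, 0 ≤ ρ → ρ < 1 →
        (1 - ENNReal.ofReal ρ)⁻¹ = ENNReal.ofReal ((1-ρ)⁻¹) := by
      intro ρ h0 h1
      rw [← ENNReal.ofReal_one, ← ENNReal.ofReal_sub _ h0,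
        ENNReal.ofReal_inv_of_pos (by linarith)]
    calc _ ≤ ENNReal.ofReal (K₁ / φ r) * (1 - ENNReal.ofReal ρ₁)⁻¹
          + ENNReal.ofReal (K₂ / φ r) * (1 - ENNReal.ofReal ρ₂)⁻¹ := by
          rw [hS1]; exact add_le_add_right hS2 _
    _ = ENNReal.ofReal ((K₁ * (1 - ρ₁)⁻¹ + K₂ * (1 - ρ₂)⁻¹) / φ r) := by
        rw [hconv ρ₁ hρ₁pos.le hρ₁lt, hconv ρ₂ hρ₂pos.le hρ₂lt,
          ← ENNReal.ofReal_mul (by positivity), ← ENNReal.ofReal_mul (by positivity),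
          ← ENNReal.ofReal_add (by positivity) (by positivity)]
        congr 1; field_simp
  exact le_trans hstep1 hstep2
end

section
/- Let ℰ(f,g) = ∫∫ (f(x)−f(y))(g(x)−g(y)) J(dx,dy) be a symmetric pure-jump Dirichlet form. For f bounded measurable and v = (u−θ)⁺ with θ > 0, and for any x, y in the state space: (u(x)−u(y))(φ²(x)v(x)−φ²(y)v(y)) ≥ (3/4)φ²(x)(v(x)−v(y))² − (1/4)φ²(y)(v(x)−v(y))² − 2v(y)²(φ(x)−φ(y))², whenever u(x) ≥ u(y), where 0 ≤ φ ≤ 1. -/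
/-- The pointwise inequality behind the Caccioppoli estimate: for
    `v = (u−θ)⁺` and a cut-off `0 ≤ φ ≤ 1`, whenever `u(y) ≤ u(x)`,
    `(u(x)−u(y))(φ(x)²v(x)−φ(y)²v(y)) ≥ (3/4)φ(x)²(v(x)−v(y))²
       − (1/4)φ(y)²(v(x)−v(y))² − 2v(y)²(φ(x)−φ(y))²`. -/
theorem stmt_18 {α : Type*} (u φ : α → ℝ) (θ : ℝ) (hθ : 0 < θ)
    (hφ : ∀ z, 0 ≤ φ z ∧ φ z ≤ 1)
    (v : α → ℝ) (hv : ∀ z, v z = max (u z - θ) 0) :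
    ∀ x y, u y ≤ u x →
      (u x - u y) * ((φ x) ^ 2 * v x - (φ y) ^ 2 * v y) ≥
        3 / 4 * (φ x) ^ 2 * (v x - v y) ^ 2
          - 1 / 4 * (φ y) ^ 2 * (v x - v y) ^ 2
          - 2 * (v y) ^ 2 * (φ x - φ y) ^ 2 := by
  intro x y hxy
  have hvx : v x = max (u x - θ) 0 := hv x
  have hvy : v y = max (u y - θ) 0 := hv y
  have hvx0 : 0 ≤ v x := by rw [hvx]; exact le_max_right _ _
  have hvy0 : 0 ≤ v y := by rw [hvy]; exact le_max_right _ _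
  have h1 : v x - v y ≤ u x - u y := by
    rw [hvx, hvy]
    rcases le_total (u x - θ) 0 with h | h <;> rcases le_total (u y - θ) 0 with h' | h' <;>
      simp [max_eq_left, max_eq_right, h, h'] <;> linarith
  have h2 : (u x - u y) * v y = (v x - v y) * v y := by
    rcases le_or_gt (u y - θ) 0 with h | h
    · have : v y = 0 := by rw [hvy, max_eq_right h]
      rw [this]; ring
    · have hx' : 0 < u x - θ := by linarith
      rw [hvx, hvy, max_eq_left h.le, max_eq_left hx'.le]; ring
  have hmono : v y ≤ v x := by
    rw [hvx, hvy]; exact max_le_max (by linarith) le_rfl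
  nlinarith [sq_nonneg ((v x - v y) * (φ x + φ y) + 4 * v y * (φ x - φ y)),
    sq_nonneg (φ x - φ y), sq_nonneg (φ x + φ y), h2,
    mul_nonneg (mul_nonneg (sub_nonneg.2 h1) hvx0) (sq_nonneg (φ x))]
end
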